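/- Let q ∈ ℂ with q^j ≠ 1 for all integers j ≥ 1 and let z ∈ ℂ with z ≠ 0. For w ∈ ℂ let φ_w be the linear functional on F defined by φ_w(|m⟩) = (q²)_m w^m/(q)_m, where (q²)_m = ∏_{j=1}^m (1 − q^{2j}). Then, with M(z) acting from the right on V* ⊗ V* ⊗ F* (V = ℂ², dual basis v₀*, v₁*) by (v_a* ⊗ v_b* ⊗ φ) ↦ ∑_{i,j∈{0,1}} v_i* ⊗ v_j* ⊗ (φ ∘ M(z)^{a,b}_{i,j}), the following are left eigenvectors of M(z) with eigenvalue 1: (i) v₀* ⊗ v₀* ⊗ φ and v₁* ⊗ v₁* ⊗ φ for every linear functional φ on F; (ii) (α v₁* ⊗ v₀* + β v₀* ⊗ v₁*) ⊗ φ_{α/(βz)} for every α, β ∈ ℂ with β ≠ 0. Explicitly, part (ii) states: for all k,l ∈ {0,1} with k+l = 1, ∑_{i+j=1} α^i β^j (φ_{α/(βz)} ∘ M(z)^{i,j}_{k,l}) = α^k β^l φ_{α/(βz)}. -/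

import Mathlib

/-!
Part (i) holds because `M^{0,0}_{i,j}` and `M^{1,1}_{i,j}` vanish unless `(i,j)` equals the upper
indices, where they are the identity. For part (ii) put `w = α/(βz)`; the two components become
`φ_w ∘ a⁺ = w (φ_w + q φ_w ∘ k̃)` and `w (φ_w ∘ a⁻) = φ_w - φ_w ∘ k̃`. On basis vectors both are the
recursion `φ_w|m+1⟩ = w (1 + q^{m+1}) φ_w|m⟩`, which comes from
`(1 - q^{2(m+1)}) / (1 - q^{m+1}) = 1 + q^{m+1}`; this division needs `q` not to be a root of unity.
-/

open scoped TensorProduct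
open scoped Classical

noncomputable section

/-- The Fock space: complex vector space with basis `{|m⟩ : m ∈ ℕ}`. -/
abbrev FockSp : Type := ℕ →₀ ℂ

/-- basis vector `|m⟩` -/
def ket (m : ℕ) : FockSp := Finsupp.single m 1

/-- linear operator on the Fock space determined by its values on basis vectors -/
def opOfFun (g : ℕ → FockSp) : Module.End ℂ FockSp :=
  Finsupp.lsum ℂ fun m => LinearMap.toSpanSingleton ℂ FockSp (g m)

/-- `a⁺|m⟩ = |m+1⟩` -/
def aPlus : Module.End ℂ FockSp := opOfFun fun m => ket (m + 1)

/-- `a⁻|m⟩ = (1-q^{2m})|m-1⟩`; at `q = 0` this is `a⁻|m⟩ = |m-1⟩` with `|-1⟩ = 0` -/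
def aMinus (q : ℂ) : Module.End ℂ FockSp :=
  opOfFun fun m => (1 - q ^ (2 * m)) • ket (m - 1)

/-- `k|m⟩ = (-q)^m|m⟩`; at `q = 0` this is `k|m⟩ = δ_{m,0}|m⟩` -/
def kOp (q : ℂ) : Module.End ℂ FockSp := opOfFun fun m => (-q) ^ m • ket m

/-- `k̃|m⟩ = q^m|m⟩` -/
def ktOp (q : ℂ) : Module.End ℂ FockSp := opOfFun fun m => q ^ m • ket m

/-- numerical value of a `{0,1}`-valued edge variable (`false ↔ 0`, `true ↔ 1`) -/
def bv (b : Bool) : ℕ := cond b 1 0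

/-- The 3D `M` operator: `Mop q z a b i j` is `M(z)^{a,b}_{i,j}`. -/
def Mop (q z : ℂ) : Bool → Bool → Bool → Bool → Module.End ℂ FockSp
  | false, false, false, false => 1
  | true, true, true, true => 1
  | false, true, true, false => z • aPlus
  | true, false, false, true => z⁻¹ • aMinus q
  | false, true, false, true => ktOp q
  | true, false, true, false => (-q) • ktOp q
  | _, _, _, _ => 0

/-- `(q)_m = ∏_{j=1}^m (1 - q^j)` -/
def qPoch (q : ℂ) (m : ℕ) : ℂ := ∏ j ∈ Finset.range m, (1 - q ^ (j + 1))
/-- `(q²)_m = ∏_{j=1}^m (1 - q^{2j})` -/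
def qPoch2 (q : ℂ) (m : ℕ) : ℂ := ∏ j ∈ Finset.range m, (1 - q ^ (2 * (j + 1)))

/-- linear functional on the Fock space determined by its values on basis vectors -/
def dualOf (g : ℕ → ℂ) : FockSp →ₗ[ℂ] ℂ :=
  Finsupp.lsum ℂ fun m => LinearMap.toSpanSingleton ℂ ℂ (g m)

/-- the functional `φ_w` with `φ_w(|m⟩) = (q²)_m w^m/(q)_m` -/
def phiW (q w : ℂ) : FockSp →ₗ[ℂ] ℂ := dualOf fun m => qPoch2 q m * w ^ m / qPoch q m

lemma opOfFun_ket (g : ℕ → FockSp) (m : ℕ) : opOfFun g (ket m) = g m := by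
  simp [opOfFun, ket]

lemma dualOf_ket (g : ℕ → ℂ) (m : ℕ) : dualOf g (ket m) = g m := by
  simp [dualOf, ket]

lemma FockSp.linearMap_ext {M : Type*} [AddCommMonoid M] [Module ℂ M] {f g : FockSp →ₗ[ℂ] M}
    (h : ∀ m, f (ket m) = g (ket m)) : f = g :=
  Finsupp.lhom_ext' fun m => LinearMap.ext_ring (h m)

lemma qPoch_succ (q : ℂ) (m : ℕ) : qPoch q (m + 1) = qPoch q m * (1 - q ^ (m + 1)) :=
  Finset.prod_range_succ _ _

lemma qPoch2_succ (q : ℂ) (m : ℕ) :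
    qPoch2 q (m + 1) = qPoch2 q m * (1 - q ^ (2 * (m + 1))) :=
  Finset.prod_range_succ _ _

lemma phiW_ket (q w : ℂ) (m : ℕ) : phiW q w (ket m) = qPoch2 q m * w ^ m / qPoch q m :=
  dualOf_ket _ m

lemma phiW_ket_succ (q w : ℂ) {m : ℕ} (hm : q ^ (m + 1) ≠ 1) :
    phiW q w (ket (m + 1)) = w * (1 + q ^ (m + 1)) * phiW q w (ket m) := by
  have hm' : 1 - q ^ (m + 1) ≠ 0 := sub_ne_zero.mpr hm.symm
  rw [phiW_ket, phiW_ket, qPoch_succ, qPoch2_succ]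
  calc _ = qPoch2 q m * (1 + q ^ (m + 1)) * w ^ (m + 1) * (1 - q ^ (m + 1)) /
        (qPoch q m * (1 - q ^ (m + 1))) := by ring
    _ = _ := by rw [mul_div_mul_right _ _ hm']; ring

lemma phiW_comp_aPlus (q w : ℂ) (hq : ∀ j : ℕ, 1 ≤ j → q ^ j ≠ 1) :
    phiW q w ∘ₗ aPlus = w • (phiW q w + q • (phiW q w ∘ₗ ktOp q)) := by
  refine FockSp.linearMap_ext fun m => ?_
  simp only [LinearMap.comp_apply, aPlus, ktOp, opOfFun_ket, LinearMap.smul_apply,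
    LinearMap.add_apply, map_smul, smul_eq_mul, phiW_ket_succ q w (hq (m + 1) m.succ_pos)]
  ring

lemma smul_phiW_comp_aMinus (q w : ℂ) (hq : ∀ j : ℕ, 1 ≤ j → q ^ j ≠ 1) :
    w • (phiW q w ∘ₗ aMinus q) = phiW q w - phiW q w ∘ₗ ktOp q := by
  refine FockSp.linearMap_ext fun m => ?_
  simp only [LinearMap.comp_apply, aMinus, ktOp, opOfFun_ket, LinearMap.smul_apply,
    LinearMap.sub_apply, map_smul, smul_eq_mul]
  cases m with
  | zero => simp
  | succ n =>
    rw [Nat.add_sub_cancel, phiW_ket_succ q w (hq (n + 1) n.succ_pos)]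
    ring

/-- left eigenvectors of `M(z)` with eigenvalue 1, where `M(z)` acts from
the right on `V* ⊗ V* ⊗ F*` by `v_a*⊗v_b*⊗φ ↦ ∑_{i,j} v_i*⊗v_j*⊗(φ ∘ M(z)^{a,b}_{i,j})`
(a vector `ψ : Bool → Bool → F*` records the coefficients w.r.t. the dual basis):
(i) `v₀*⊗v₀*⊗φ` and `v₁*⊗v₁*⊗φ` are fixed for every functional `φ`;
(ii) explicitly, for `k+l = 1`:
`∑_{i+j=1} α^i β^j (φ_{α/(βz)} ∘ M(z)^{i,j}_{k,l}) = α^k β^l φ_{α/(βz)}`. -/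
theorem M_left_eigenvectors (q z : ℂ) (hq : ∀ j : ℕ, 1 ≤ j → q ^ j ≠ 1) (hz : z ≠ 0) :
    (∀ φ : FockSp →ₗ[ℂ] ℂ, ∀ i j : Bool,
        (∑ a : Bool, ∑ b : Bool,
          (if a = false ∧ b = false then φ else 0) ∘ₗ Mop q z a b i j) =
        (if i = false ∧ j = false then φ else 0)) ∧
    (∀ φ : FockSp →ₗ[ℂ] ℂ, ∀ i j : Bool,
        (∑ a : Bool, ∑ b : Bool,
          (if a = true ∧ b = true then φ else 0) ∘ₗ Mop q z a b i j) =
        (if i = true ∧ j = true then φ else 0)) ∧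
    (∀ α β : ℂ, β ≠ 0 → ∀ k l : Bool, bv k + bv l = 1 →
        (∑ i : Bool, ∑ j : Bool,
          if bv i + bv j = 1 then
            (α ^ bv i * β ^ bv j) • (phiW q (α / (β * z)) ∘ₗ Mop q z i j k l)
          else 0) =
        (α ^ bv k * β ^ bv l) • phiW q (α / (β * z))) := by
  refine ⟨fun φ i j => ?_, fun φ i j => ?_, fun α β hβ k l hkl => ?_⟩
  · cases i <;> cases j <;> simp [Mop, Module.End.one_eq_id]
  · cases i <;> cases j <;> simp [Mop, Module.End.one_eq_id]
  have hw : α / (β * z) * (β * z) = α := div_mul_cancel₀ _ (mul_ne_zero hβ hz)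
  set w := α / (β * z)
  obtain ⟨rfl, rfl⟩ | ⟨rfl, rfl⟩ : k = false ∧ l = true ∨ k = true ∧ l = false := by
    cases k <;> cases l <;> simp [bv] at hkl ⊢
  all_goals simp only [Fintype.sum_bool, bv, cond_true, cond_false, Mop, Nat.reduceAdd, ↓reduceIte,
    LinearMap.comp_zero, smul_zero, ite_self, pow_zero, pow_one, one_mul, mul_one, zero_add, add_zero]
  · rw [LinearMap.comp_smul, smul_smul, show α * z⁻¹ = β * w by rw [← hw]; field_simp,
      mul_smul, smul_phiW_comp_aMinus q w hq, ← smul_add, sub_add_cancel]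
  · rw [LinearMap.comp_smul, LinearMap.comp_smul, phiW_comp_aPlus q w hq, ← hw]
    module

end
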